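/- Let (a_n) be a monotonically nondecreasing, strictly positive real sequence and (b_n) any real sequence. Then for any M ∈ ℕ, max_{1 ≤ k ≤ M} |∑_{i=1}^k b_i| / a_k ≤ 2 · max_{1 ≤ k ≤ M} |∑_{i=1}^k b_i / a_i|. -/

import Mathlib

/-!
Write `b i = a i * c i` with `c i = b i / a i` and let `T k = ∑_{i ≤ k} c i`, so that
`|T k| ≤ B` for the right-hand maximum `B`. Summation by parts gives
`∑_{i ≤ k} b i = a k T k - ∑_{i < k} (a (i+1) - a i) T i`, and since `a` is nondecreasing the
correction term is at most `(a k - a 1) B ≤ a k B` in absolute value. Hence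
`|∑_{i ≤ k} b i| ≤ 2 a k B`.
-/

open Finset

section SummationByParts

variable {a c : ℕ → ℝ} {B : ℝ} {k : ℕ}

theorem abs_sum_Icc_mul_sub_mul_sum_le (ha : Monotone a) (hk : 1 ≤ k)
    (hc : ∀ j ∈ Icc 1 k, |∑ i ∈ Icc 1 j, c i| ≤ B) :
    |∑ i ∈ Icc 1 k, a i * c i - a k * ∑ i ∈ Icc 1 k, c i| ≤ (a k - a 1) * B := by
  induction k, hk using Nat.le_induction with
  | base => simp
  | succ k hk ih =>
    have hTk : |∑ i ∈ Icc 1 k, c i| ≤ B := hc k (mem_Icc.mpr ⟨hk, k.le_succ⟩)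
    have hstep : a k ≤ a (k + 1) := ha k.le_succ
    rw [sum_Icc_succ_top (by omega), sum_Icc_succ_top (by omega)]
    calc |∑ i ∈ Icc 1 k, a i * c i + a (k + 1) * c (k + 1)
            - a (k + 1) * (∑ i ∈ Icc 1 k, c i + c (k + 1))|
        = |(∑ i ∈ Icc 1 k, a i * c i - a k * ∑ i ∈ Icc 1 k, c i)
            - (a (k + 1) - a k) * ∑ i ∈ Icc 1 k, c i| := by
          congr 1; ring
      _ ≤ |∑ i ∈ Icc 1 k, a i * c i - a k * ∑ i ∈ Icc 1 k, c i|
            + (a (k + 1) - a k) * |∑ i ∈ Icc 1 k, c i| := by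
          refine (abs_sub _ _).trans_eq ?_
          rw [abs_mul, abs_of_nonneg (sub_nonneg.mpr hstep)]
      _ ≤ (a k - a 1) * B + (a (k + 1) - a k) * B := by
          gcongr
          exact ih fun j hj => hc j (Icc_subset_Icc_right k.le_succ hj)
      _ = (a (k + 1) - a 1) * B := by ring

theorem abs_sum_Icc_mul_le (ha : Monotone a) (ha₁ : 0 ≤ a 1) (hk : 1 ≤ k)
    (hc : ∀ j ∈ Icc 1 k, |∑ i ∈ Icc 1 j, c i| ≤ B) :
    |∑ i ∈ Icc 1 k, a i * c i| ≤ 2 * a k * B := by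
  have hTk : |∑ i ∈ Icc 1 k, c i| ≤ B := hc k (mem_Icc.mpr ⟨hk, le_rfl⟩)
  have hB : 0 ≤ B := (abs_nonneg _).trans hTk
  have hak : a 1 ≤ a k := ha hk
  have hak₀ : 0 ≤ a k := ha₁.trans hak
  set S := ∑ i ∈ Icc 1 k, a i * c i
  set T := ∑ i ∈ Icc 1 k, c i
  calc |S| = |(S - a k * T) + a k * T| := by rw [sub_add_cancel]
    _ ≤ |S - a k * T| + |a k * T| := abs_add_le _ _
    _ ≤ (a k - a 1) * B + a k * B := by
        rw [abs_mul, abs_of_nonneg hak₀]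
        gcongr
        exact abs_sum_Icc_mul_sub_mul_sum_le ha hk hc
    _ ≤ 2 * a k * B := by nlinarith

end SummationByParts

theorem maximal_weighted_sum_inequality
    (a b : ℕ → ℝ) (ha : ∀ n, 0 < a n) (hmono : Monotone a)
    (M : ℕ) (hM : 1 ≤ M) :
    (Finset.Icc 1 M).sup' (Finset.nonempty_Icc.mpr hM)
        (fun k => |∑ i ∈ Finset.Icc 1 k, b i| / a k)
      ≤ 2 * (Finset.Icc 1 M).sup' (Finset.nonempty_Icc.mpr hM)
        (fun k => |∑ i ∈ Finset.Icc 1 k, b i / a i|) := by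
  refine sup'_le _ _ fun k hk => ?_
  obtain ⟨hk₁, hkM⟩ := mem_Icc.mp hk
  have hb : ∑ i ∈ Icc 1 k, b i = ∑ i ∈ Icc 1 k, a i * (b i / a i) :=
    sum_congr rfl fun i _ => (mul_div_cancel₀ _ (ha i).ne').symm
  rw [div_le_iff₀ (ha k), mul_right_comm, hb]
  exact abs_sum_Icc_mul_le hmono (ha 1).le hk₁ fun j hj =>
    le_sup' (fun j => |∑ i ∈ Icc 1 j, b i / a i|) (Icc_subset_Icc_right hkM hj)
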